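/- Monotonicity of mutual information under adding variables: for a joint pmf on α × β × γ, I(X;Y,Z) ≥ I(X;Y), where I(X;Y,Z) = H(X) + H(Y,Z) - H(X,Y,Z) and I(X;Y) = H(X) + H(Y) - H(X,Y) are computed from the appropriate marginals. -/
import Mathlib

lemma gibbs_pt (a b : ℝ) (ha : 0 ≤ a) (hb : 0 ≤ b) (h : b = 0 → a = 0) :
    a * Real.logb 2 b - a * Real.logb 2 a ≤ (b - a) / Real.log 2 := by
  have hl2 : 0 < Real.log 2 := Real.log_pos one_lt_two
  rcases eq_or_lt_of_le ha with h0 | h0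
  · rw [← h0]
    simp only [zero_mul, sub_zero, sub_self]
    positivity
  · have hbne : b ≠ 0 := fun e => h0.ne' (h e)
    have hb' : 0 < b := lt_of_le_of_ne hb (Ne.symm hbne)
    have hlog : Real.log (b / a) ≤ b / a - 1 := Real.log_le_sub_one_of_pos (by positivity)
    have h1 : Real.log (b / a) = Real.log b - Real.log a := Real.log_div hbne h0.ne'
    have hc : a * (b / a) = b := by field_simp
    have hmain : a * Real.log b - a * Real.log a ≤ b - a := by nlinarith [hlog, h1, hc]
    have e : a * Real.logb 2 b - a * Real.logb 2 a
        = (a * Real.log b - a * Real.log a) / Real.log 2 := by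
      simp only [Real.logb]; ring
    rw [e]
    gcongr

lemma sum3 {α β γ : Type*} [Fintype α] [Fintype β] [Fintype γ] (f : α × β × γ → ℝ) :
    ∑ w, f w = ∑ x, ∑ y, ∑ z, f (x, y, z) := by
  simp [Fintype.sum_prod_type]

noncomputable def ent {α : Type*} [Fintype α] (q : α → ℝ) : ℝ :=
  -∑ x, q x * Real.logb 2 (q x)

theorem mutual_info_mono {α β γ : Type*} [Fintype α] [Fintype β] [Fintype γ]
    (p : α × β × γ → ℝ) (hp : ∀ z, 0 ≤ p z) (hsum : ∑ z, p z = 1) :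
    ent (fun x : α => ∑ y, ∑ z, p (x, y, z)) +
        ent (fun y : β => ∑ x, ∑ z, p (x, y, z)) -
        ent (fun xy : α × β => ∑ z, p (xy.1, xy.2, z)) ≤
      ent (fun x : α => ∑ y, ∑ z, p (x, y, z)) +
        ent (fun yz : β × γ => ∑ x, p (x, yz.1, yz.2)) - ent p := by
  classical
  have hl2 : 0 < Real.log 2 := Real.log_pos one_lt_two
  set g : β → ℝ := fun y => ∑ x, ∑ z, p (x, y, z) with hg
  set r : α × β → ℝ := fun xy => ∑ z, p (xy.1, xy.2, z) with hr
  set q : β × γ → ℝ := fun yz => ∑ x, p (x, yz.1, yz.2) with hq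
  -- nonnegativity of marginals
  have hg0 : ∀ y, 0 ≤ g y := fun y => Finset.sum_nonneg fun _ _ => Finset.sum_nonneg fun _ _ => hp _
  have hr0 : ∀ xy, 0 ≤ r xy := fun xy => Finset.sum_nonneg fun _ _ => hp _
  have hq0 : ∀ yz, 0 ≤ q yz := fun yz => Finset.sum_nonneg fun _ _ => hp _
  -- single-term bounds
  have hpr : ∀ x y z, p (x, y, z) ≤ r (x, y) := by
    intro x y z
    exact Finset.single_le_sum (fun i _ => hp (x, y, i)) (Finset.mem_univ z)
  have hpq : ∀ x y z, p (x, y, z) ≤ q (y, z) := by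
    intro x y z
    exact Finset.single_le_sum (fun i _ => hp (i, y, z)) (Finset.mem_univ x)
  have hpg : ∀ x y z, p (x, y, z) ≤ g y := by
    intro x y z
    calc p (x, y, z) ≤ ∑ z', p (x, y, z') := hpr x y z
    _ ≤ g y := Finset.single_le_sum (f := fun x' => ∑ z', p (x', y, z'))
        (fun i _ => Finset.sum_nonneg fun _ _ => hp _) (Finset.mem_univ x)
  -- the comparison distribution
  set t : α × β × γ → ℝ := fun w => r (w.1, w.2.1) * q (w.2.1, w.2.2) / g w.2.1 with ht
  have ht0 : ∀ w, 0 ≤ t w := fun w => div_nonneg (mul_nonneg (hr0 _) (hq0 _)) (hg0 _)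
  -- marginal sums of r and q over the extra variable give g
  have hrg : ∀ y, ∑ x, r (x, y) = g y := fun y => rfl
  have hqg : ∀ y, ∑ z, q (y, z) = g y := by
    intro y
    show ∑ z, ∑ x, p (x, y, z) = ∑ x, ∑ z, p (x, y, z)
    rw [Finset.sum_comm]
  -- total mass of t is at most 1
  have hsum1 : ∑ y, g y = 1 := by
    rw [← hsum, sum3 p, Finset.sum_comm]
  have htsum : ∑ w, t w ≤ 1 := by
    rw [sum3 t, Finset.sum_comm]
    have key : ∀ y : β, ∑ x, ∑ w : γ, t (x, y, w) ≤ g y := by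
      intro y
      have hfact : ∑ x, ∑ w : γ, t (x, y, w)
          = (∑ x, r (x, y)) * (∑ w, q (y, w)) / g y := by
        simp only [ht, Finset.sum_mul_sum, ← Finset.sum_div]
      rw [hfact, hrg, hqg]
      rcases eq_or_lt_of_le (hg0 y) with h0 | h0
      · rw [← h0]; simp
      · rw [mul_div_assoc, div_self h0.ne', mul_one]
    calc ∑ y, ∑ x, ∑ w : γ, t (x, y, w) ≤ ∑ y, g y := Finset.sum_le_sum fun y _ => key y
    _ = 1 := hsum1
  -- Gibbs inequality : ∑ p log t - ∑ p log p ≤ 0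
  have hgibbs : ∑ w, p w * Real.logb 2 (t w) - ∑ w, p w * Real.logb 2 (p w) ≤ 0 := by
    rw [← Finset.sum_sub_distrib]
    calc ∑ w, (p w * Real.logb 2 (t w) - p w * Real.logb 2 (p w))
        ≤ ∑ w, (t w - p w) / Real.log 2 := by
          apply Finset.sum_le_sum
          intro w _
          apply gibbs_pt _ _ (hp w) (ht0 w)
          intro htz
          by_contra hpz
          have hpw : 0 < p w := lt_of_le_of_ne (hp w) (Ne.symm hpz)
          obtain ⟨x, y, z⟩ := w
          have hrp : 0 < r (x, y) := lt_of_lt_of_le hpw (hpr x y z)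
          have hqp : 0 < q (y, z) := lt_of_lt_of_le hpw (hpq x y z)
          have hgp : 0 < g y := lt_of_lt_of_le hpw (hpg x y z)
          have : 0 < t (x, y, z) := by
            simp only [ht]
            positivity
          exact this.ne' htz
      _ = (∑ w, t w - 1) / Real.log 2 := by
          rw [← Finset.sum_div, Finset.sum_sub_distrib, hsum]
      _ ≤ 0 := by
          apply div_nonpos_of_nonpos_of_nonneg _ hl2.le
          linarith [htsum]
  -- rewrite ∑ p log t termwise
  have hsplit : ∑ w : α × β × γ, p w * Real.logb 2 (t w)
      = ∑ w : α × β × γ, p w * Real.logb 2 (r (w.1, w.2.1))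
        + ∑ w : α × β × γ, p w * Real.logb 2 (q (w.2.1, w.2.2))
        - ∑ w : α × β × γ, p w * Real.logb 2 (g w.2.1) := by
    rw [← Finset.sum_add_distrib, ← Finset.sum_sub_distrib]
    apply Finset.sum_congr rfl
    intro w _
    rcases eq_or_lt_of_le (hp w) with h0 | h0
    · rw [← h0]; ring
    · obtain ⟨x, y, z⟩ := w
      have hrp : 0 < r (x, y) := lt_of_lt_of_le h0 (hpr x y z)
      have hqp : 0 < q (y, z) := lt_of_lt_of_le h0 (hpq x y z)
      have hgp : 0 < g y := lt_of_lt_of_le h0 (hpg x y z)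
      have : Real.logb 2 (t (x, y, z))
          = Real.logb 2 (r (x, y)) + Real.logb 2 (q (y, z)) - Real.logb 2 (g y) := by
        simp only [ht]
        rw [Real.logb_div (by positivity) hgp.ne', Real.logb_mul hrp.ne' hqp.ne']
      rw [this]; ring
  -- marginal entropies as triple sums
  have hEg : ∑ y, g y * Real.logb 2 (g y)
      = ∑ w : α × β × γ, p w * Real.logb 2 (g w.2.1) := by
    rw [sum3, Finset.sum_comm]
    apply Finset.sum_congr rfl
    intro y _
    show (∑ x, ∑ z, p (x, y, z)) * Real.logb 2 (g y) = _
    rw [Finset.sum_mul]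
    exact Finset.sum_congr rfl fun x _ => Finset.sum_mul _ _ _
  have hEr : ∑ xy : α × β, r xy * Real.logb 2 (r xy)
      = ∑ w : α × β × γ, p w * Real.logb 2 (r (w.1, w.2.1)) := by
    rw [sum3, Fintype.sum_prod_type]
    apply Finset.sum_congr rfl
    intro x _
    apply Finset.sum_congr rfl
    intro y _
    show (∑ z, p (x, y, z)) * Real.logb 2 (r (x, y)) = _
    rw [Finset.sum_mul]
  have hEq : ∑ yz : β × γ, q yz * Real.logb 2 (q yz)
      = ∑ w : α × β × γ, p w * Real.logb 2 (q (w.2.1, w.2.2)) := by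
    rw [sum3, Finset.sum_comm, Fintype.sum_prod_type]
    apply Finset.sum_congr rfl
    intro y _
    rw [Finset.sum_comm]
    apply Finset.sum_congr rfl
    intro z _
    show (∑ x, p (x, y, z)) * Real.logb 2 (q (y, z)) = _
    rw [Finset.sum_mul]
  -- conclude
  simp only [ent]
  linarith [hgibbs, hsplit, hEg, hEr, hEq]
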